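/- arXiv:1307.5188 — 2 statements merged into one kernel-verified Lean document; each statement's English description precedes it below -/
import Mathlib

section
/- For every integer k and every integer n ≥ 1, the n-th poly-Cauchy number of the first kind satisfies C_n^(k) = (1/n) Σ_{l=0}^{n} (-1)^{n-l} (n-l)! C(n,l) ( T_l^{(1,k-1)} − T_l^{(1,k)} ), where the numbers T_n^{(r,k)} are defined by the generating function (t/log(1+t))^r · Lif_k(log(1+t)) = Σ_{n≥0} T_n^{(r,k)} t^n/n!. -/
open PowerSeries Finset

/-- Composition `F(G(t))` of formal power series (intended for `G` with zero
constant term, in which case `coeff n (G ^ m) = 0` for `m > n` and the finite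
sum below computes the usual composition). -/
noncomputable def psComp (F G : PowerSeries ℝ) : PowerSeries ℝ :=
  PowerSeries.mk fun n => ∑ m ∈ Finset.range (n + 1),
    (PowerSeries.coeff (R := ℝ) m F) * (PowerSeries.coeff (R := ℝ) n (G ^ m))

/-- The formal power series of `log (1 + t)`. -/
noncomputable def logSeries : PowerSeries ℝ :=
  PowerSeries.mk fun n => if n = 0 then 0 else (-1) ^ (n + 1) / n

/-- The polylogarithm factorial function `Lif_k(t) = ∑_{m ≥ 0} t^m / (m! (m+1)^k)`. -/
noncomputable def Lif (k : ℤ) : PowerSeries ℝ :=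
  PowerSeries.mk fun m => 1 / ((m.factorial : ℝ) * ((m : ℝ) + 1) ^ k)

/-- The poly-Cauchy polynomial of the first kind `C_n^{(k)}(x)`, defined by
`Lif_k(log(1+t)) / (1+t)^x = ∑_{n ≥ 0} C_n^{(k)}(x) t^n / n!`, where
`(1+t)^{-x} = exp (-x · log (1+t))`. -/
noncomputable def polyCauchy (k : ℤ) (n : ℕ) (x : ℝ) : ℝ :=
  (n.factorial : ℝ) * PowerSeries.coeff (R := ℝ) n
    (psComp (Lif k) logSeries *
      psComp (PowerSeries.rescale (-x) (PowerSeries.exp ℝ)) logSeries)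

/-- The (signed) Stirling numbers of the first kind `S₁(l, m)`, defined by
`(log (1+t))^m = m! ∑_{l ≥ m} S₁(l,m) t^l / l!`. -/
noncomputable def S1 (l m : ℕ) : ℝ :=
  (l.factorial : ℝ) / (m.factorial : ℝ) * PowerSeries.coeff (R := ℝ) l (logSeries ^ m)

/-- The ordinary Bernoulli numbers, via `t/(e^t - 1) = ∑ B_n t^n/n!`;
here `(mk fun m => 1/(m+1)!)` is the series `(e^t - 1)/t`. -/
noncomputable def Bern (n : ℕ) : ℝ :=
  (n.factorial : ℝ) * PowerSeries.coeff (R := ℝ) n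
    (PowerSeries.mk fun m => (1 : ℝ) / (m + 1).factorial)⁻¹

/-- The Bernoulli polynomial of order `r`, via `(t/(e^t-1))^r e^{xt} = ∑ B_n^{(r)}(x) t^n/n!`. -/
noncomputable def bernPoly (r : ℕ) (n : ℕ) (x : ℝ) : ℝ :=
  (n.factorial : ℝ) * PowerSeries.coeff (R := ℝ) n
    (((PowerSeries.mk fun m => (1 : ℝ) / (m + 1).factorial)⁻¹) ^ r *
      PowerSeries.rescale x (PowerSeries.exp ℝ))

/-- The series `log(1+t)/t`, so that `t / log(1+t) = Dlog⁻¹`. -/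
noncomputable def Dlog : PowerSeries ℝ :=
  PowerSeries.mk fun n => (-1) ^ n / ((n : ℝ) + 1)

/-- The Cauchy numbers of the first kind, via `t/log(1+t) = ∑ C_n t^n/n!`. -/
noncomputable def cauchyNum (n : ℕ) : ℝ :=
  (n.factorial : ℝ) * PowerSeries.coeff (R := ℝ) n Dlog⁻¹

/-- The numbers `T_n^{(r,k)}`, via
`(t/log(1+t))^r · Lif_k(log(1+t)) = ∑ T_n^{(r,k)} t^n/n!`. -/
noncomputable def T (r : ℕ) (k : ℤ) (n : ℕ) : ℝ :=
  (n.factorial : ℝ) * PowerSeries.coeff (R := ℝ) n (Dlog⁻¹ ^ r * psComp (Lif k) logSeries)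

/-- The rising factorial `x^{(m)} = x (x+1) ⋯ (x+m-1)`. -/
noncomputable def risingFactorial (x : ℝ) (m : ℕ) : ℝ :=
  ∏ i ∈ Finset.range m, (x + i)

/-- Carlitz's polynomials `β_n^{(r)}(x)`, via `(t/log(1+t))^r (1+t)^x = ∑ β_n^{(r)}(x) t^n/n!`,
where `(1+t)^x = exp (x log (1+t))`. -/
noncomputable def carlitz (r : ℕ) (n : ℕ) (x : ℝ) : ℝ :=
  (n.factorial : ℝ) * PowerSeries.coeff (R := ℝ) n
    (Dlog⁻¹ ^ r * psComp (PowerSeries.rescale x (PowerSeries.exp ℝ)) logSeries)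

/-! Write `f_k(t) = Lif_k(log(1+t))`. Termwise, `x Lif_k'(x) = Lif_{k-1}(x) - Lif_k(x)`, so by the
chain rule `t f_k'(t) = (t / log(1+t)) (f_{k-1}(t) - f_k(t)) / (1+t)`. The coefficient of `t^n`
on the left is `n C_n^{(k)} / n!`; on the right it is the convolution of
`∑ (T_l^{(1,k-1)} - T_l^{(1,k)}) t^l / l!` with `1 / (1+t) = ∑ (-t)^j`. -/

theorem PowerSeries.coeff_X_mul_derivative {R : Type*} [CommSemiring R] (f : R⟦X⟧) (n : ℕ) :
    coeff n (X * d⁄dX R f) = n * coeff n f := by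
  cases n with
  | zero => simp
  | succ n => rw [coeff_succ_X_mul, coeff_derivative, mul_comm]; push_cast; rfl

theorem PowerSeries.coeff_mul_derivative_log {A : Type*} [CommRing A] [Algebra ℚ A]
    (g : A⟦X⟧) (n : ℕ) :
    coeff n (g * d⁄dX A (log A)) = ∑ l ∈ range (n + 1), (-1) ^ (n - l) * coeff l g := by
  simp only [coeff_mul, Nat.sum_antidiagonal_eq_sum_range_succ_mk, deriv_log, coeff_mk,
    map_pow, map_neg, map_one, mul_comm]

theorem psComp_eq_subst (F : ℝ⟦X⟧) {G : ℝ⟦X⟧} (hG : constantCoeff G = 0) :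
    psComp F G = F.subst G := by
  ext n
  rw [psComp, coeff_mk, coeff_subst' (.of_constantCoeff_zero' hG),
    finsum_eq_sum_of_support_subset _ (s := range (n + 1))]
  · simp only [smul_eq_mul]
  · intro m hm
    by_contra h
    simp only [coe_range, Set.mem_Iio, not_lt] at h
    apply hm
    simp [X_pow_dvd_iff.mp (pow_dvd_pow_of_dvd (X_dvd_iff.mpr hG) m) n (by omega)]

theorem logSeries_eq_log : logSeries = log ℝ := by
  ext n
  simp [logSeries]

theorem psComp_logSeries (F : ℝ⟦X⟧) : psComp F logSeries = F.subst (log ℝ) := by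
  rw [psComp_eq_subst F (by simp [logSeries_eq_log]), logSeries_eq_log]

theorem X_mul_Dlog : X * Dlog = log ℝ := by
  ext n
  cases n with
  | zero => simp
  | succ n =>
    rw [coeff_succ_X_mul, Dlog, coeff_mk, coeff_log, if_neg n.succ_ne_zero]
    push_cast
    ring

theorem Dlog_mul_inv : Dlog * Dlog⁻¹ = 1 :=
  PowerSeries.mul_inv_cancel _ (by simp [Dlog])

theorem X_mul_derivative_Lif (k : ℤ) : X * d⁄dX ℝ (Lif k) = Lif (k - 1) - Lif k := by
  ext n
  rw [coeff_X_mul_derivative, map_sub]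
  simp only [Lif, coeff_mk]
  have h1 : ((n : ℝ) + 1) ≠ 0 := by positivity
  rw [zpow_sub_one₀ h1]
  field_simp
  ring

theorem X_mul_derivative_subst_log_Lif (k : ℤ) :
    X * d⁄dX ℝ ((Lif k).subst (log ℝ)) =
      Dlog⁻¹ * ((Lif (k - 1)).subst (log ℝ) - (Lif k).subst (log ℝ)) * d⁄dX ℝ (log ℝ) := by
  have hL : HasSubst (log ℝ) := .log
  have h : X * Dlog * (d⁄dX ℝ (Lif k)).subst (log ℝ) =
      (Lif (k - 1)).subst (log ℝ) - (Lif k).subst (log ℝ) := by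
    rw [X_mul_Dlog, ← subst_sub hL, ← X_mul_derivative_Lif, subst_mul hL, subst_X hL]
  rw [derivative_subst hL]
  linear_combination Dlog⁻¹ * d⁄dX ℝ (log ℝ) * h -
    X * (d⁄dX ℝ (Lif k)).subst (log ℝ) * d⁄dX ℝ (log ℝ) * Dlog_mul_inv

theorem polyCauchy_zero (k : ℤ) (n : ℕ) :
    polyCauchy k n 0 = n.factorial * coeff n ((Lif k).subst (log ℝ)) := by
  have h1 : (1 : ℝ⟦X⟧).subst (log ℝ) = 1 := by rw [← coe_substAlgHom .log, map_one]
  simp [polyCauchy, psComp_logSeries, constantCoeff_exp, h1]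

theorem T_one_sub (k : ℤ) (n : ℕ) :
    T 1 (k - 1) n - T 1 k n =
      n.factorial * coeff n (Dlog⁻¹ * ((Lif (k - 1)).subst (log ℝ) - (Lif k).subst (log ℝ))) := by
  simp only [T, pow_one, psComp_logSeries, mul_sub, map_sub]

/-- Lemma 6 of the paper. -/
theorem polyCauchyNumber_eq_T_sum (k : ℤ) (n : ℕ) (hn : 1 ≤ n) :
    polyCauchy k n 0 =
      (1 / (n : ℝ)) * ∑ l ∈ Finset.range (n + 1),
        (-1 : ℝ) ^ (n - l) * ((n - l).factorial : ℝ) * (n.choose l : ℝ) *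
          (T 1 (k - 1) l - T 1 k l) := by
  set a : ℕ → ℝ := fun l ↦
    coeff l (Dlog⁻¹ * ((Lif (k - 1)).subst (log ℝ) - (Lif k).subst (log ℝ)))
  have hrec : (n : ℝ) * coeff n ((Lif k).subst (log ℝ)) =
      ∑ l ∈ range (n + 1), (-1) ^ (n - l) * a l := by
    rw [← coeff_X_mul_derivative, X_mul_derivative_subst_log_Lif, coeff_mul_derivative_log]
  have hterm : ∀ l ∈ range (n + 1), (-1 : ℝ) ^ (n - l) * ((n - l).factorial : ℝ) *
      (n.choose l : ℝ) * (T 1 (k - 1) l - T 1 k l) = n.factorial * ((-1) ^ (n - l) * a l) := by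
    intro l hl
    rw [T_one_sub, ← Nat.choose_mul_factorial_mul_factorial (Nat.lt_succ_iff.mp (mem_range.mp hl))]
    push_cast
    ring
  have hn0 : (n : ℝ) ≠ 0 := Nat.cast_ne_zero.mpr (by omega)
  rw [sum_congr rfl hterm, ← mul_sum, ← hrec, polyCauchy_zero]
  field_simp
end

section
/- For every integer k and every integer n ≥ 1, the derivative of the poly-Cauchy polynomial of the first kind satisfies (d/dx) C_n^(k)(x) = (-1)^n n! Σ_{l=0}^{n-1} ( (-1)^l / ((n-l) l!) ) C_l^(k)(x). -/
open PowerSeries Finset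

/-! Since `(1+t)^{-x} = exp (-x log (1+t))`, differentiating the generating function in `x`
multiplies it by `-log (1+t)`; comparing coefficients of `t^n`, with
`log (1+t) = ∑_{j ≥ 1} (-1)^(j+1) t^j / j`, gives the formula. Differentiation is done
coefficientwise: every coefficient of `(1+t)^{-x}` is a polynomial in `x`. -/

lemma coeff_pow_eq_zero_of_lt {R : Type*} [CommSemiring R] {G : PowerSeries R}
    (hG : constantCoeff G = 0) {m n : ℕ} (h : n < m) : coeff n (G ^ m) = 0 :=
  X_pow_dvd_iff.1 (pow_dvd_pow_of_dvd (X_dvd_iff.2 hG) m) n h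

lemma psComp_neg (F G : PowerSeries ℝ) : psComp (-F) G = -psComp F G := by
  ext n
  simp [psComp, sum_neg_distrib]

section psComp

variable {G : PowerSeries ℝ}

lemma coeff_psComp_of_lt (F : PowerSeries ℝ) (hG : constantCoeff G = 0) {n N : ℕ} (h : n < N) :
    coeff n (psComp F G) = ∑ m ∈ range N, coeff m F * coeff n (G ^ m) := by
  rw [psComp, coeff_mk]
  refine sum_subset (range_subset_range.2 h) fun m _ hm => ?_
  rw [coeff_pow_eq_zero_of_lt hG (by simpa using hm), mul_zero]

lemma psComp_X_mul (F : PowerSeries ℝ) (hG : constantCoeff G = 0) :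
    psComp (X * F) G = G * psComp F G := by
  ext n
  calc coeff n (psComp (X * F) G)
      = ∑ m ∈ range (n + 1), coeff m F * coeff n (G ^ (m + 1)) := by
        rw [coeff_psComp_of_lt _ hG (by omega : n < n + 2), sum_range_succ']
        simp
    _ = ∑ m ∈ range (n + 1), ∑ p ∈ antidiagonal n,
          coeff p.1 G * (coeff m F * coeff p.2 (G ^ m)) := by
        refine sum_congr rfl fun m _ => ?_
        rw [pow_succ', coeff_mul, mul_sum]
        exact sum_congr rfl fun p _ => by ring
    _ = coeff n (G * psComp F G) := by
        rw [sum_comm, coeff_mul]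
        refine sum_congr rfl fun p hp => ?_
        rw [coeff_psComp_of_lt F hG (N := n + 1) (Nat.antidiagonal.snd_lt hp),
          mul_sum]

end psComp

lemma constantCoeff_logSeries : constantCoeff logSeries = 0 := by
  simp [← coeff_zero_eq_constantCoeff_apply, logSeries]

lemma coeff_logSeries_mul (G : PowerSeries ℝ) (n : ℕ) :
    coeff n (logSeries * G) =
      ∑ l ∈ range n, (-1) ^ (n - l + 1) / ((n - l : ℕ) : ℝ) * coeff l G := by
  rw [mul_comm, coeff_mul,
    Nat.sum_antidiagonal_eq_sum_range_succ (fun i j => coeff i G * coeff j logSeries), sum_range_succ, Nat.sub_self, coeff_zero_eq_constantCoeff_apply, constantCoeff_logSeries,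
    mul_zero, add_zero]
  refine sum_congr rfl fun l hl => ?_
  rw [logSeries, coeff_mk, if_neg (by simp at hl; omega), mul_comm]

section deriv

variable {F F' : ℝ → PowerSeries ℝ} {x : ℝ}

lemma hasDerivAt_coeff_mul_left (A : PowerSeries ℝ)
    (hF : ∀ m, HasDerivAt (fun y => coeff m (F y)) (coeff m (F' x)) x) (n : ℕ) :
    HasDerivAt (fun y => coeff n (A * F y)) (coeff n (A * F' x)) x := by
  simp only [coeff_mul]
  exact HasDerivAt.fun_sum fun p _ => (hF p.2).const_mul _

lemma hasDerivAt_coeff_psComp (G : PowerSeries ℝ)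
    (hF : ∀ m, HasDerivAt (fun y => coeff m (F y)) (coeff m (F' x)) x) (n : ℕ) :
    HasDerivAt (fun y => coeff n (psComp (F y) G)) (coeff n (psComp (F' x) G)) x := by
  simp only [psComp, coeff_mk]
  exact HasDerivAt.fun_sum fun m _ => (hF m).mul_const _

end deriv

lemma hasDerivAt_coeff_rescale_exp (x : ℝ) (m : ℕ) :
    HasDerivAt (fun y => coeff m (rescale y (exp ℝ))) (coeff m (X * rescale x (exp ℝ))) x := by
  cases m with
  | zero => simpa using hasDerivAt_const x (1 : ℝ)
  | succ m =>
    simp only [coeff_rescale]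
    refine ((hasDerivAt_pow (m + 1) x).mul_const (coeff (m + 1) (exp ℝ))).congr_deriv ?_
    simp only [coeff_succ_X_mul, coeff_rescale, coeff_exp, Nat.factorial_succ]
    push_cast
    field_simp

lemma hasDerivAt_coeff_psComp_rescale_neg_exp {G : PowerSeries ℝ} (hG : constantCoeff G = 0)
    (x : ℝ) (n : ℕ) :
    HasDerivAt (fun y => coeff n (psComp (rescale (-y) (exp ℝ)) G))
      (-coeff n (G * psComp (rescale (-x) (exp ℝ)) G)) x := by
  rw [← psComp_X_mul _ hG, ← map_neg, ← psComp_neg]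
  refine hasDerivAt_coeff_psComp (F' := fun _ => -(X * rescale (-x) (exp ℝ))) G (fun m => ?_) n
  exact ((hasDerivAt_coeff_rescale_exp (-x) m).comp x (hasDerivAt_neg x)).congr_deriv (by simp)

noncomputable def polyCauchyGF (k : ℤ) (x : ℝ) : PowerSeries ℝ :=
  psComp (Lif k) logSeries * psComp (rescale (-x) (exp ℝ)) logSeries

lemma polyCauchy_eq_coeff_polyCauchyGF (k : ℤ) (n : ℕ) (x : ℝ) :
    polyCauchy k n x = n.factorial * coeff n (polyCauchyGF k x) := rfl

lemma hasDerivAt_coeff_polyCauchyGF (k : ℤ) (n : ℕ) (x : ℝ) :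
    HasDerivAt (fun y => coeff n (polyCauchyGF k y))
      (-coeff n (logSeries * polyCauchyGF k x)) x := by
  rw [polyCauchyGF, mul_left_comm, ← map_neg, ← mul_neg]
  refine hasDerivAt_coeff_mul_left
    (F' := fun x => -(logSeries * psComp (rescale (-x) (exp ℝ)) logSeries)) _ (fun m => ?_) n
  exact (hasDerivAt_coeff_psComp_rescale_neg_exp constantCoeff_logSeries x m).congr_deriv
    (map_neg _ _).symm

lemma neg_one_pow_sub {R : Type*} [Monoid R] [HasDistribNeg R] {l n : ℕ} (h : l ≤ n) :
    (-1 : R) ^ (n - l) = (-1) ^ n * (-1) ^ l := by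
  rw [← pow_sub_mul_pow (-1 : R) h, mul_assoc, ← pow_add, ← two_mul, pow_mul, neg_one_sq, one_pow,
    mul_one]

theorem deriv_polyCauchy_general (k : ℤ) (n : ℕ) (x : ℝ) :
    deriv (fun y => polyCauchy k n y) x =
      (-1 : ℝ) ^ n * (n.factorial : ℝ) *
        ∑ l ∈ Finset.range n,
          ((-1 : ℝ) ^ l / (((n : ℝ) - l) * (l.factorial : ℝ))) * polyCauchy k l x := by
  have hderiv : HasDerivAt (fun y => polyCauchy k n y)
      (n.factorial * -coeff n (logSeries * polyCauchyGF k x)) x :=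
    (hasDerivAt_coeff_polyCauchyGF k n x).const_mul _
  rw [hderiv.deriv, coeff_logSeries_mul, mul_neg, mul_sum, mul_sum, ← sum_neg_distrib]
  refine sum_congr rfl fun l hl => ?_
  have hln : l < n := mem_range.1 hl
  rw [polyCauchy_eq_coeff_polyCauchyGF, pow_succ, neg_one_pow_sub hln.le, Nat.cast_sub hln.le]
  field_simp

/-- derivative of the poly-Cauchy polynomial. -/
theorem deriv_polyCauchy (k : ℤ) (n : ℕ) (hn : 1 ≤ n) (x : ℝ) :
    deriv (fun y => polyCauchy k n y) x =
      (-1 : ℝ) ^ n * (n.factorial : ℝ) *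
        ∑ l ∈ Finset.range n,
          ((-1 : ℝ) ^ l / (((n : ℝ) - l) * (l.factorial : ℝ))) * polyCauchy k l x :=
  deriv_polyCauchy_general k n x
end
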